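/- For every p > 0 and every l ∈ ℝ, the quantity sup_{z∈ℂ} ρ(z)^{2(p−1)} e^{−pφ(z)} ∫_{ℂ \ B(z,R)} (β(z,ξ) + 1)^l |K(z,ξ)|^p e^{−pφ(ξ)} dA(ξ) tends to 0 as R → ∞. -/

import Mathlib

/-!
On the far region `R ≤ β(z, ξ)` the bound `β(ξ, z) ≤ C₁ (s + 2)²`, with `s = |ξ - z| / ρ(ξ)`,
forces `s` to be large. The growth condition on `ρ` trades `ρ(ξ)` for `ρ(z)`, and
`|ξ - z| / ρ(z)` for `s`, at a cost polynomial in `s`; so the integrand is at most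
`(s + 2)^Q e^{-p s^ε}` times `e^{pφ(z)} ρ(z)^{-2p} (1 + |ξ - z| / ρ(z))^{-3}`. The first factor
tends to `0` as `s → ∞`, and the second integrates over `ℂ` to a constant times
`e^{pφ(z)} ρ(z)^{2 - 2p}`.
-/

open MeasureTheory Filter Metric Set
open scoped ENNReal

open Real Topology

theorem tendsto_rpow_mul_exp_neg_mul_rpow_atTop (Q : ℝ) {c ε : ℝ} (hc : 0 < c) (hε : 0 < ε) :
    Tendsto (fun s : ℝ => s ^ Q * exp (-(c * s ^ ε))) atTop (𝓝 0) := by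
  have h := (tendsto_rpow_mul_exp_neg_mul_atTop_nhds_zero (Q / ε) c hc).comp
    (tendsto_rpow_atTop hε)
  refine h.congr' ((eventually_ge_atTop 0).mono fun s hs => ?_)
  simp only [Function.comp_apply, neg_mul]
  rw [← rpow_mul hs, mul_div_cancel₀ _ hε.ne']

theorem tendsto_add_rpow_mul_exp_neg_mul_rpow_atTop {a : ℝ} (ha : 0 ≤ a) (Q : ℝ) {c ε : ℝ}
    (hc : 0 < c) (hε : 0 < ε) :
    Tendsto (fun s : ℝ => (s + a) ^ Q * exp (-(c * s ^ ε))) atTop (𝓝 0) := by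
  have h := (tendsto_rpow_mul_exp_neg_mul_rpow_atTop |Q| hc hε).const_mul (2 ^ |Q|)
  rw [mul_zero] at h
  have hlarge := eventually_ge_atTop (max a 1)
  refine squeeze_zero' (hlarge.mono fun s hs => ?_) (hlarge.mono fun s hs => ?_) h
  · have : 0 ≤ s + a := by linarith [le_max_right a 1]
    positivity
  have h1 : 1 ≤ s + a := by linarith [le_max_right a 1]
  have h2 : s + a ≤ 2 * s := by linarith [le_max_left a 1]
  calc (s + a) ^ Q * exp (-(c * s ^ ε)) ≤ (2 * s) ^ |Q| * exp (-(c * s ^ ε)) := by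
        gcongr
        exact (rpow_le_rpow_of_exponent_le h1 (le_abs_self Q)).trans
          (rpow_le_rpow (by linarith) h2 (abs_nonneg Q))
    _ = 2 ^ |Q| * (s ^ |Q| * exp (-(c * s ^ ε))) := by
        rw [mul_rpow zero_le_two (by linarith [le_max_right a 1]), mul_assoc]

theorem rpow_le_rpow_max_zero {x y : ℝ} (l : ℝ) (hx : 1 ≤ x) (hxy : x ≤ y) :
    x ^ l ≤ y ^ max l 0 :=
  (rpow_le_rpow_of_exponent_le hx (le_max_left l 0)).trans
    (rpow_le_rpow (by linarith) hxy (le_max_right l 0))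

section Scaling

variable {E : Type*} [NormedAddCommGroup E] [NormedSpace ℝ E] [FiniteDimensional ℝ E]
  [MeasurableSpace E] [BorelSpace E] (μ : Measure E) [μ.IsAddHaarMeasure]

theorem lintegral_one_add_norm_sub_div_rpow_neg {b : ℝ} (hb : (Module.finrank ℝ E : ℝ) < b)
    (z : E) {r : ℝ} (hr : 0 < r) :
    ∫⁻ x, ENNReal.ofReal ((1 + ‖x - z‖ / r) ^ (-b)) ∂μ =
      ENNReal.ofReal (r ^ Module.finrank ℝ E * ∫ x, (1 + ‖x‖) ^ (-b) ∂μ) := by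
  have hscale : ∀ x, (1 + ‖x - z‖ / r) ^ (-b) = (1 + ‖r⁻¹ • (x - z)‖) ^ (-b) := fun x => by
    rw [norm_smul, norm_inv, Real.norm_of_nonneg hr.le, inv_mul_eq_div]
  have hint : Integrable (fun x => (1 + ‖r⁻¹ • (x - z)‖) ^ (-b)) μ :=
    ((integrable_one_add_norm hb).comp_smul (inv_ne_zero hr.ne')).comp_sub_right z
  simp_rw [hscale]
  rw [← ofReal_integral_eq_lintegral_ofReal hint (Eventually.of_forall fun x => by positivity),
    integral_sub_right_eq_self (fun x => (1 + ‖r⁻¹ • x‖) ^ (-b)) z,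
    Measure.integral_comp_inv_smul_of_nonneg μ (fun x => (1 + ‖x‖) ^ (-b)) hr.le, smul_eq_mul]

theorem setLIntegral_ofReal_le_of_le_decay {b : ℝ} (hb : (Module.finrank ℝ E : ℝ) < b) (z : E)
    {r : ℝ} (hr : 0 < r) {s : Set E} {F : E → ℝ} {c : ℝ} (hc : 0 ≤ c)
    (hF : ∀ x ∈ s, F x ≤ c * (1 + ‖x - z‖ / r) ^ (-b)) :
    ∫⁻ x in s, ENNReal.ofReal (F x) ∂μ ≤
      ENNReal.ofReal (c * (r ^ Module.finrank ℝ E * ∫ x, (1 + ‖x‖) ^ (-b) ∂μ)) :=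
  calc ∫⁻ x in s, ENNReal.ofReal (F x) ∂μ
      ≤ ∫⁻ x in s, ENNReal.ofReal (c * (1 + ‖x - z‖ / r) ^ (-b)) ∂μ :=
        setLIntegral_mono (by fun_prop) fun x hx => ENNReal.ofReal_le_ofReal (hF x hx)
    _ ≤ ∫⁻ x, ENNReal.ofReal (c * (1 + ‖x - z‖ / r) ^ (-b)) ∂μ := setLIntegral_le_lintegral _ _
    _ = ENNReal.ofReal (c * (r ^ Module.finrank ℝ E * ∫ x, (1 + ‖x‖) ^ (-b) ∂μ)) := by
        simp_rw [ENNReal.ofReal_mul hc]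
        rw [lintegral_const_mul' _ _ ENNReal.ofReal_ne_top,
          lintegral_one_add_norm_sub_div_rpow_neg μ hb z hr]

end Scaling

section

variable {ρ : ℂ → ℝ}

theorem rho_le_mul_rho (hρ : ∀ z, 0 < ρ z) {C₀ θ : ℝ} (hC₀ : 0 < C₀)
    (hρ₂ : ∀ (z w : ℂ) (r : ℝ), 1 < r → w ∈ Metric.ball z (r * ρ z) →
      (C₀ * r ^ θ)⁻¹ ≤ ρ w / ρ z) (z w : ℂ) :
    ρ z ≤ C₀ * (‖z - w‖ / ρ z + 2) ^ θ * ρ w := by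
  have hz := hρ z
  have hr : 1 < ‖z - w‖ / ρ z + 2 := by linarith [div_nonneg (norm_nonneg (z - w)) hz.le]
  have hmem : w ∈ Metric.ball z ((‖z - w‖ / ρ z + 2) * ρ z) := by
    rw [mem_ball, dist_comm, dist_eq_norm, add_mul, div_mul_cancel₀ _ hz.ne']
    linarith
  have hlow := hρ₂ z w _ hr hmem
  rwa [inv_le_iff_one_le_mul₀ (by positivity), div_mul_eq_mul_div, one_le_div hz,
    mul_comm] at hlow

theorem add_two_le_of_le_mul_rpow {C₀ θ x y d : ℝ} (hθ : 0 ≤ θ) (hx : 0 < x)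
    (hy : 0 < y) (hd : 0 ≤ d) (h : x ≤ C₀ * (d / x + 2) ^ θ * y) :
    d / y + 2 ≤ (C₀ + 2) * (d / x + 2) ^ (θ + 1) := by
  set W := d / x + 2
  have hW : 1 ≤ W := by have := div_nonneg hd hx.le; linarith
  have hWθ : 1 ≤ W ^ (θ + 1) := one_le_rpow hW (by linarith)
  have hdy : d / y ≤ C₀ * W ^ (θ + 1) :=
    calc d / y = d / x * (x / y) := by field_simp
      _ ≤ W * (C₀ * W ^ θ) := by
        gcongr
        · linarith
        · rwa [div_le_iff₀ hy]
      _ = C₀ * W ^ (θ + 1) := by rw [rpow_add_one (by linarith)]; ring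
  nlinarith

theorem beta_le_mul_add_two_sq (hρ : ∀ z, 0 < ρ z) {β : ℂ → ℂ → ℝ} {C₁ δ : ℝ} (hC₁ : 0 ≤ C₁)
    (hδ : 0 ≤ δ)
    (hnear : ∀ z w : ℂ, w ∈ Metric.ball z (1 * ρ z) → β z w ≤ C₁ * (‖z - w‖ / ρ z))
    (hfar : ∀ z w : ℂ, w ∉ Metric.ball z (1 * ρ z) → β z w ≤ C₁ * (‖z - w‖ / ρ z) ^ (2 - δ))
    (z w : ℂ) : β z w ≤ C₁ * (‖z - w‖ / ρ z + 2) ^ 2 := by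
  set t := ‖z - w‖ / ρ z
  have ht : 0 ≤ t := div_nonneg (norm_nonneg _) (hρ z).le
  by_cases hw : w ∈ Metric.ball z (1 * ρ z)
  · refine (hnear z w hw).trans (mul_le_mul_of_nonneg_left ?_ hC₁)
    nlinarith
  · have ht1 : 1 ≤ t := by
      rw [mem_ball, not_lt, one_mul, dist_comm, dist_eq_norm] at hw
      exact (one_le_div (hρ z)).mpr hw
    refine (hfar z w hw).trans (mul_le_mul_of_nonneg_left ?_ hC₁)
    calc t ^ (2 - δ) ≤ t ^ (2 : ℝ) := rpow_le_rpow_of_exponent_le ht1 (by linarith)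
      _ ≤ (t + 2) ^ 2 := by rw [rpow_two]; nlinarith

theorem norm_kernel_rpow_mul_exp_le (hρ : ∀ z, 0 < ρ z) {C₀ θ : ℝ} (hC₀ : 0 < C₀)
    (hρ₂ : ∀ (z w : ℂ) (r : ℝ), 1 < r → w ∈ Metric.ball z (r * ρ z) →
      (C₀ * r ^ θ)⁻¹ ≤ ρ w / ρ z)
    {φ : ℂ → ℝ} {K : ℂ → ℂ → ℂ} {C ε : ℝ} (hC : 0 ≤ C)
    (hK : ∀ w z : ℂ, ‖K w z‖ ≤ C * (exp (φ w + φ z) / (ρ w * ρ z)) *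
      exp (-((‖z - w‖ / ρ z) ^ ε)))
    {p : ℝ} (hp : 0 ≤ p) (z ξ : ℂ) :
    ‖K z ξ‖ ^ p * exp (-(p * φ ξ)) ≤
      (C * C₀) ^ p * (‖ξ - z‖ / ρ z + 2) ^ (θ * p) * exp (-(p * (‖ξ - z‖ / ρ ξ) ^ ε)) *
        (exp (p * φ z) * ρ z ^ (-(2 * p))) := by
  set u := ‖ξ - z‖ / ρ z
  set s := ‖ξ - z‖ / ρ ξ
  have hz := hρ z
  have hξ := hρ ξ
  have hcomp : ρ z * ρ z ≤ C₀ * (u + 2) ^ θ * (ρ z * ρ ξ) := by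
    nlinarith [norm_sub_rev z ξ ▸ rho_le_mul_rho hρ hC₀ hρ₂ z ξ]
  have hu : 0 ≤ u + 2 := by positivity
  have hbase : ‖K z ξ‖ * exp (-φ ξ) ≤
      C * C₀ * (u + 2) ^ θ * exp (-s ^ ε) * exp (φ z) * ρ z ^ (-2 : ℝ) :=
    calc ‖K z ξ‖ * exp (-φ ξ)
        ≤ C * (exp (φ z + φ ξ) / (ρ z * ρ ξ)) * exp (-s ^ ε) * exp (-φ ξ) := by
          gcongr; exact hK z ξ
      _ = C * exp (-s ^ ε) * exp (φ z) * (ρ z * ρ ξ)⁻¹ := by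
          rw [exp_add, exp_neg (φ ξ)]; field_simp
      _ ≤ C * exp (-s ^ ε) * exp (φ z) * (C₀ * (u + 2) ^ θ * (ρ z * ρ z)⁻¹) := by
          gcongr
          rw [← div_eq_mul_inv, inv_eq_one_div, div_le_div_iff₀ (by positivity) (by positivity)]
          linarith
      _ = C * C₀ * (u + 2) ^ θ * exp (-s ^ ε) * exp (φ z) * ρ z ^ (-2 : ℝ) := by
          rw [rpow_neg hz.le, rpow_two, sq]; ring
  calc ‖K z ξ‖ ^ p * exp (-(p * φ ξ)) = (‖K z ξ‖ * exp (-φ ξ)) ^ p := by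
        rw [mul_rpow (norm_nonneg _) (exp_pos _).le, ← exp_mul]; ring_nf
    _ ≤ (C * C₀ * (u + 2) ^ θ * exp (-s ^ ε) * exp (φ z) * ρ z ^ (-2 : ℝ)) ^ p := by
        gcongr
    _ = (C * C₀) ^ p * (u + 2) ^ (θ * p) * exp (-(p * s ^ ε)) *
          (exp (p * φ z) * ρ z ^ (-(2 * p))) := by
        rw [mul_rpow (by positivity) (by positivity), mul_rpow (by positivity) (by positivity),
          mul_rpow (by positivity) (by positivity), mul_rpow (by positivity) (by positivity),
          ← rpow_mul hu, ← rpow_mul hz.le, ← exp_mul, ← exp_mul]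
        ring_nf

theorem integrand_le_mul_decay (hρ : ∀ z, 0 < ρ z) {C₀ θ : ℝ} (hC₀ : 0 < C₀) (hθ : 0 ≤ θ)
    (hρ₂ : ∀ (z w : ℂ) (r : ℝ), 1 < r → w ∈ Metric.ball z (r * ρ z) →
      (C₀ * r ^ θ)⁻¹ ≤ ρ w / ρ z)
    {β : ℂ → ℂ → ℝ} (hβsymm : ∀ z w, β z w = β w z) (hβnonneg : ∀ z w, 0 ≤ β z w)
    {C₁ : ℝ} (hC₁ : 0 ≤ C₁) (hβ : ∀ z w, β z w ≤ C₁ * (‖z - w‖ / ρ z + 2) ^ 2)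
    {φ : ℂ → ℝ} {K : ℂ → ℂ → ℂ} {C ε : ℝ} (hC : 0 ≤ C)
    (hK : ∀ w z : ℂ, ‖K w z‖ ≤ C * (exp (φ w + φ z) / (ρ w * ρ z)) *
      exp (-((‖z - w‖ / ρ z) ^ ε)))
    {p : ℝ} (hp : 0 ≤ p) (l : ℝ) :
    ∃ B Q : ℝ, ∀ z ξ : ℂ,
      (β z ξ + 1) ^ l * ‖K z ξ‖ ^ p * exp (-(p * φ ξ)) ≤
        B * ((‖ξ - z‖ / ρ ξ + 2) ^ Q * exp (-(p * (‖ξ - z‖ / ρ ξ) ^ ε))) *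
          (exp (p * φ z) * ρ z ^ (-(2 * p)) * (1 + ‖ξ - z‖ / ρ z) ^ (-3 : ℝ)) := by
  set m := max l 0
  set a := θ * p + 3
  refine ⟨(1 + C₁) ^ m * (C * C₀) ^ p * (C₀ + 2) ^ a, 2 * m + (θ + 1) * a, fun z ξ => ?_⟩
  set u := ‖ξ - z‖ / ρ z
  set W := ‖ξ - z‖ / ρ ξ + 2
  set E := exp (p * φ z) * ρ z ^ (-(2 * p))
  have hz := hρ z
  have hu : 0 ≤ u := div_nonneg (norm_nonneg _) hz.le
  have hW : 1 ≤ W := by linarith [div_nonneg (norm_nonneg (ξ - z)) (hρ ξ).le]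
  have hβW : (β z ξ + 1) ^ l ≤ ((1 + C₁) * W ^ 2) ^ m := by
    refine rpow_le_rpow_max_zero l (by linarith [hβnonneg z ξ]) ?_
    nlinarith [hβsymm z ξ ▸ hβ ξ z, one_le_pow₀ (n := 2) hW]
  have huW : u + 2 ≤ (C₀ + 2) * W ^ (θ + 1) :=
    add_two_le_of_le_mul_rpow hθ (hρ ξ) hz (norm_nonneg _) (rho_le_mul_rho hρ hC₀ hρ₂ ξ z)
  -- the factor `(u + 2)³` is absorbed into the polynomial cost, leaving an integrable one
  have hdecay : 1 ≤ (u + 2) ^ (3 : ℝ) * (1 + u) ^ (-3 : ℝ) := by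
    rw [rpow_neg (by positivity), ← div_eq_mul_inv, one_le_div (by positivity)]
    exact rpow_le_rpow (by positivity) (by linarith) (by norm_num)
  calc (β z ξ + 1) ^ l * ‖K z ξ‖ ^ p * exp (-(p * φ ξ))
      = (β z ξ + 1) ^ l * (‖K z ξ‖ ^ p * exp (-(p * φ ξ))) := mul_assoc _ _ _
    _ ≤ ((1 + C₁) * W ^ 2) ^ m *
          ((C * C₀) ^ p * (u + 2) ^ (θ * p) * exp (-(p * (‖ξ - z‖ / ρ ξ) ^ ε)) * E) :=
        mul_le_mul hβW (norm_kernel_rpow_mul_exp_le hρ hC₀ hρ₂ hC hK hp z ξ) (by positivity)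
          (by positivity)
    _ ≤ ((1 + C₁) * W ^ 2) ^ m *
          ((C * C₀) ^ p * (u + 2) ^ (θ * p) * exp (-(p * (‖ξ - z‖ / ρ ξ) ^ ε)) * E) *
          ((u + 2) ^ (3 : ℝ) * (1 + u) ^ (-3 : ℝ)) :=
        le_mul_of_one_le_right (by positivity) hdecay
    _ = ((1 + C₁) * W ^ 2) ^ m * (C * C₀) ^ p * (u + 2) ^ a *
          exp (-(p * (‖ξ - z‖ / ρ ξ) ^ ε)) * (E * (1 + u) ^ (-3 : ℝ)) := by
        rw [rpow_add (by positivity)]; ring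
    _ ≤ ((1 + C₁) * W ^ 2) ^ m * (C * C₀) ^ p * ((C₀ + 2) * W ^ (θ + 1)) ^ a *
          exp (-(p * (‖ξ - z‖ / ρ ξ) ^ ε)) * (E * (1 + u) ^ (-3 : ℝ)) := by
        gcongr
    _ = (1 + C₁) ^ m * (C * C₀) ^ p * (C₀ + 2) ^ a *
          (W ^ (2 * m + (θ + 1) * a) * exp (-(p * (‖ξ - z‖ / ρ ξ) ^ ε))) *
          (E * (1 + u) ^ (-3 : ℝ)) := by
        have hW0 : 0 ≤ W := by linarith
        have hpow : ((1 + C₁) * W ^ 2) ^ m * ((C₀ + 2) * W ^ (θ + 1)) ^ a =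
            (1 + C₁) ^ m * (C₀ + 2) ^ a * W ^ (2 * m + (θ + 1) * a) := by
          rw [mul_rpow (by positivity) (by positivity), mul_rpow (by positivity) (by positivity),
            ← rpow_natCast, ← rpow_mul hW0, ← rpow_mul hW0, rpow_add (by linarith : 0 < W)]
          push_cast
          ring
        linear_combination (C * C₀) ^ p * exp (-(p * (‖ξ - z‖ / ρ ξ) ^ ε)) *
          (E * (1 + u) ^ (-3 : ℝ)) * hpow

theorem integrand_le_of_le_beta (hρ : ∀ z, 0 < ρ z) {C₀ θ : ℝ} (hC₀ : 0 < C₀) (hθ : 0 ≤ θ)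
    (hρ₂ : ∀ (z w : ℂ) (r : ℝ), 1 < r → w ∈ Metric.ball z (r * ρ z) →
      (C₀ * r ^ θ)⁻¹ ≤ ρ w / ρ z)
    {β : ℂ → ℂ → ℝ} (hβsymm : ∀ z w, β z w = β w z) (hβnonneg : ∀ z w, 0 ≤ β z w)
    {C₁ : ℝ} (hC₁ : 0 < C₁) (hβ : ∀ z w, β z w ≤ C₁ * (‖z - w‖ / ρ z + 2) ^ 2)
    {φ : ℂ → ℝ} {K : ℂ → ℂ → ℂ} {C ε : ℝ} (hC : 0 ≤ C) (hε : 0 < ε)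
    (hK : ∀ w z : ℂ, ‖K w z‖ ≤ C * (exp (φ w + φ z) / (ρ w * ρ z)) *
      exp (-((‖z - w‖ / ρ z) ^ ε)))
    {p : ℝ} (hp : 0 < p) (l : ℝ) {η : ℝ} (hη : 0 < η) :
    ∃ R₀ : ℝ, ∀ R, R₀ ≤ R → ∀ z ξ : ℂ, R ≤ β z ξ →
      (β z ξ + 1) ^ l * ‖K z ξ‖ ^ p * exp (-(p * φ ξ)) ≤
        η * (exp (p * φ z) * ρ z ^ (-(2 * p))) * (1 + ‖ξ - z‖ / ρ z) ^ (-3 : ℝ) := by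
  obtain ⟨B, Q, hpoint⟩ :=
    integrand_le_mul_decay hρ hC₀ hθ hρ₂ hβsymm hβnonneg hC₁.le hβ hC hK hp.le l
  have hlim := (tendsto_add_rpow_mul_exp_neg_mul_rpow_atTop zero_le_two Q hp hε).const_mul B
  rw [mul_zero] at hlim
  obtain ⟨S, hS⟩ := eventually_atTop.1 (hlim.eventually (ge_mem_nhds hη))
  refine ⟨C₁ * (max S 0 + 2) ^ 2, fun R hR z ξ hξ => ?_⟩
  have hs : 0 ≤ ‖ξ - z‖ / ρ ξ := div_nonneg (norm_nonneg _) (hρ ξ).le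
  have hSs : S ≤ ‖ξ - z‖ / ρ ξ := by
    have hsq := le_of_mul_le_mul_left ((hR.trans hξ).trans (hβsymm z ξ ▸ hβ ξ z)) hC₁
    rw [pow_le_pow_iff_left₀ (by positivity) (by linarith) two_ne_zero] at hsq
    linarith [le_max_left S 0]
  refine (hpoint z ξ).trans ((mul_le_mul_of_nonneg_right (hS _ hSs) ?_).trans_eq (by ring))
  have := hρ z
  positivity

end

theorem stmt5_general
    (ρ : ℂ → ℝ) (hρ : ∀ z, 0 < ρ z)
    (C₀ θ : ℝ) (hC₀ : 0 < C₀) (hθ : 0 < θ)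
    (hρ₂ : ∀ (z w : ℂ) (r : ℝ), 1 < r → w ∈ Metric.ball z (r * ρ z) →
      (C₀ * r ^ θ)⁻¹ ≤ ρ w / ρ z ∧ ρ w / ρ z ≤ C₀ * r ^ θ)
    (β : ℂ → ℂ → ℝ)
    (hβsymm : ∀ z w, β z w = β w z) (hβnonneg : ∀ z w, 0 ≤ β z w)
    (δ : ℝ) (hδ : 0 < δ ∧ δ < 1)
    (hβ : ∀ r : ℝ, 0 < r → ∃ Cr : ℝ, 0 < Cr ∧
      (∀ z w : ℂ, w ∈ Metric.ball z (r * ρ z) →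
        Cr⁻¹ * (‖z - w‖ / ρ z) ≤ β z w ∧
        β z w ≤ Cr * (‖z - w‖ / ρ z)) ∧
      (∀ z w : ℂ, w ∉ Metric.ball z (r * ρ z) →
        Cr⁻¹ * (‖z - w‖ / ρ z) ^ δ ≤ β z w ∧
        β z w ≤ Cr * (‖z - w‖ / ρ z) ^ (2 - δ)))
    (φ : ℂ → ℝ)
    (K : ℂ → ℂ → ℂ)
    (hK : ∃ C : ℝ, 0 < C ∧ ∃ ε : ℝ, 0 < ε ∧ ∀ w z : ℂ,
      ‖K w z‖ ≤ C * (Real.exp (φ w + φ z) / (ρ w * ρ z)) *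
        Real.exp (-((‖z - w‖ / ρ z) ^ ε)))
    (p l : ℝ) (hp : 0 < p) :
    ∀ e : ℝ, 0 < e → ∃ R₀ : ℝ, ∀ R : ℝ, R₀ ≤ R → ∀ z : ℂ,
      (∫⁻ ξ in {ξ : ℂ | R ≤ β z ξ}, ENNReal.ofReal ((β z ξ + 1) ^ l *
          ‖K z ξ‖ ^ p * Real.exp (-(p * φ ξ)))) ≤
        ENNReal.ofReal (e * ρ z ^ (2 * (1 - p)) * Real.exp (p * φ z)) := by
  intro e he
  obtain ⟨C, hC, ε, hε, hKb⟩ := hK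
  obtain ⟨C₁, hC₁, hnear, hfar⟩ := hβ 1 one_pos
  have hβle := beta_le_mul_add_two_sq hρ hC₁.le hδ.1.le (fun z w hw => (hnear z w hw).2)
    (fun z w hw => (hfar z w hw).2)
  set M := ∫ w : ℂ, (1 + ‖w‖) ^ (-3 : ℝ)
  have hM : 0 ≤ M := integral_nonneg fun w => by positivity
  obtain ⟨R₀, hR₀⟩ := integrand_le_of_le_beta hρ hC₀ hθ.le
    (fun z w r hr hw => (hρ₂ z w r hr hw).1) hβsymm hβnonneg hC₁ hβle hC.le hε hKb hp l
    (by positivity : 0 < e / (M + 1))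
  refine ⟨R₀, fun R hR z => ?_⟩
  have hz := hρ z
  refine (setLIntegral_ofReal_le_of_le_decay volume
    (by rw [Complex.finrank_real_complex]; norm_num) z hz (by positivity)
    fun ξ hξ => hR₀ R hR z ξ hξ).trans (ENNReal.ofReal_le_ofReal ?_)
  have hρpow : ρ z ^ (-(2 * p)) * ρ z ^ 2 = ρ z ^ (2 * (1 - p)) := by
    rw [← rpow_natCast, ← rpow_add hz]; push_cast; ring_nf
  rw [Complex.finrank_real_complex]
  calc e / (M + 1) * (exp (p * φ z) * ρ z ^ (-(2 * p))) * (ρ z ^ 2 * M)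
      = e * (M / (M + 1)) * (ρ z ^ (2 * (1 - p)) * exp (p * φ z)) := by
        rw [← hρpow]; field_simp
    _ ≤ e * 1 * (ρ z ^ (2 * (1 - p)) * exp (p * φ z)) := by
        gcongr
        exact (div_le_one (by positivity)).2 (by linarith)
    _ = e * ρ z ^ (2 * (1 - p)) * exp (p * φ z) := by ring

/-- The quantity
`sup_z ρ(z)^{2(p-1)} e^{-pφ(z)} ∫_{ℂ∖B(z,R)} (β(z,ξ)+1)^l |K(z,ξ)|^p e^{-pφ(ξ)} dA(ξ)`
tends to `0` as `R → ∞`; equivalently, for every `e > 0` there is `R₀` such that for all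
`R ≥ R₀` and all `z` the tail integral is at most `e · ρ(z)^{2(1-p)} e^{pφ(z)}`. -/
theorem stmt5
    (ρ : ℂ → ℝ) (hρ : ∀ z, 0 < ρ z)
    (C₀ θ : ℝ) (hC₀ : 0 < C₀) (hθ : 0 < θ)
    (hρ₁ : ∀ (z w : ℂ) (r : ℝ), 0 < r → r ≤ 1 → w ∈ Metric.ball z (r * ρ z) →
      C₀⁻¹ ≤ ρ w / ρ z ∧ ρ w / ρ z ≤ C₀)
    (hρ₂ : ∀ (z w : ℂ) (r : ℝ), 1 < r → w ∈ Metric.ball z (r * ρ z) →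
      (C₀ * r ^ θ)⁻¹ ≤ ρ w / ρ z ∧ ρ w / ρ z ≤ C₀ * r ^ θ)
    (β : ℂ → ℂ → ℝ)
    (hβsymm : ∀ z w, β z w = β w z) (hβnonneg : ∀ z w, 0 ≤ β z w)
    (hβeq : ∀ z w, β z w = 0 ↔ z = w)
    (hβtri : ∀ z w u, β z u ≤ β z w + β w u)
    (δ : ℝ) (hδ : 0 < δ ∧ δ < 1)
    (hβ : ∀ r : ℝ, 0 < r → ∃ Cr : ℝ, 0 < Cr ∧
      (∀ z w : ℂ, w ∈ Metric.ball z (r * ρ z) →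
        Cr⁻¹ * (‖z - w‖ / ρ z) ≤ β z w ∧
        β z w ≤ Cr * (‖z - w‖ / ρ z)) ∧
      (∀ z w : ℂ, w ∉ Metric.ball z (r * ρ z) →
        Cr⁻¹ * (‖z - w‖ / ρ z) ^ δ ≤ β z w ∧
        β z w ≤ Cr * (‖z - w‖ / ρ z) ^ (2 - δ)))
    (φ : ℂ → ℝ) (hφm : Measurable φ)
    (K : ℂ → ℂ → ℂ)
    (hK : ∃ C : ℝ, 0 < C ∧ ∃ ε : ℝ, 0 < ε ∧ ∀ w z : ℂ,
      ‖K w z‖ ≤ C * (Real.exp (φ w + φ z) / (ρ w * ρ z)) *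
        Real.exp (-((‖z - w‖ / ρ z) ^ ε)))
    (p l : ℝ) (hp : 0 < p) :
    ∀ e : ℝ, 0 < e → ∃ R₀ : ℝ, ∀ R : ℝ, R₀ ≤ R → ∀ z : ℂ,
      (∫⁻ ξ in {ξ : ℂ | R ≤ β z ξ}, ENNReal.ofReal ((β z ξ + 1) ^ l *
          ‖K z ξ‖ ^ p * Real.exp (-(p * φ ξ)))) ≤
        ENNReal.ofReal (e * ρ z ^ (2 * (1 - p)) * Real.exp (p * φ z)) :=
  stmt5_general ρ hρ C₀ θ hC₀ hθ hρ₂ β hβsymm hβnonneg δ hδ hβ φ K hK p l hp
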